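/- arXiv:2501.17436 — 5 statements merged into one kernel-verified Lean document; each statement's English description precedes it below -/
import Mathlib

section
/- (Identification of the geodesic ATT.) Suppose: (a) Y₀ = Y₀(0) P-almost surely; (b) Y₁ = Y₁(0) P-almost surely on the event {D = 0}; (c) Y₁ = Y₁(1) P-almost surely on the event {D = 1}; (d) for d,t ∈ {0,1} the conditional Fréchet means ν_{d,t} of Y_t given {D = d} exist and are unique, as do the conditional Fréchet means ν_{0,0}(0), ν_{0,1}(0), ν_{1,0}(0), ν_{1,1}(0) of Y₀(0), Y₁(0) given the respective groups and ν_{1,1}(1) of Y₁(1) given {D = 1}; and (e) the parallel trends condition Γ_{ν_{0,0}(0), ν_{0,1}(0)}(ν_{1,0}(0)) = ν_{1,1}(0) holds. Then Γ_{ν_{0,0}, ν_{0,1}}(ν_{1,0}) = ν_{1,1}(0) and ν_{1,1} = ν_{1,1}(1); that is, the geodesic DID estimand ⊖γ_{ν_{0,0},ν_{0,1}} ⊕ γ_{ν_{1,0},ν_{1,1}}, which is the geodesic from Γ_{ν_{0,0},ν_{0,1}}(ν_{1,0}) to ν_{1,1}, coincides with the geodesic ATT τ = γ_{ν_{1,1}(0),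 ν_{1,1}(1)}. -/
open MeasureTheory

/-- `ν` is the (unique) conditional Fréchet mean of `Z : Ω → M` given the event `E`:
it is the unique minimizer over `ω ∈ M` of `∫_E d(Z,ω)² dP`. -/
def IsCondFrechetMean {Ω M : Type*} [MetricSpace M] [MeasurableSpace Ω]
    (P : Measure Ω) (E : Set Ω) (Z : Ω → M) (ν : M) : Prop :=
  ∀ ω : M, ω ≠ ν → (∫ x in E, dist (Z x) ν ^ 2 ∂P) < ∫ x in E, dist (Z x) ω ^ 2 ∂P

/-- If two maps agree a.e. on `E` then their conditional Fréchet means coincide. -/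
lemma condFrechetMean_unique_of_ae_eq {Ω M : Type*} [MetricSpace M] [MeasurableSpace Ω]
    (P : Measure Ω) (E : Set Ω) (Z Z' : Ω → M) {ν ν' : M}
    (heq : ∀ᵐ x ∂(P.restrict E), Z x = Z' x)
    (h : IsCondFrechetMean P E Z ν) (h' : IsCondFrechetMean P E Z' ν') : ν = ν' := by
  by_contra hne
  have key : ∀ ω : M, (∫ x in E, dist (Z x) ω ^ 2 ∂P) = ∫ x in E, dist (Z' x) ω ^ 2 ∂P := by
    intro ω
    exact integral_congr_ae (heq.mono fun x hx => by simp only [hx])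
  have h1 := h ν' (Ne.symm hne)
  have h2 := h' ν hne
  rw [key ν', key ν] at h1
  exact absurd (h1.trans h2) (lt_irrefl _)

/-- Identification of the geodesic ATT: under consistency of observed and potential
outcomes, existence and uniqueness of the conditional Fréchet means, and the geodesic
parallel trends condition `Γ_{ν₀₀(0),ν₀₁(0)}(ν₁₀(0)) = ν₁₁(0)`, the geodesic DID
estimand coincides with the geodesic ATT: `Γ_{ν₀₀,ν₀₁}(ν₁₀) = ν₁₁(0)` and
`ν₁₁ = ν₁₁(1)`. -/
theorem geodesic_did_identification
    {Ω M : Type*} [MetricSpace M] [MeasurableSpace Ω] [MeasurableSpace M]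
    (P : Measure Ω) [IsProbabilityMeasure P]
    (Γ : M → M → M → M)
    (D : Ω → ℕ) (hD : Measurable D)
    (hD0 : P {x | D x = 0} ≠ 0) (hD1 : P {x | D x = 1} ≠ 0)
    (Y₀ Y₁ Yp₀₀ Yp₁₀ Yp₁₁ : Ω → M)          -- observed Y₀, Y₁ and potential Y₀(0), Y₁(0), Y₁(1)
    (hY₀ : Measurable Y₀) (hY₁ : Measurable Y₁)
    (hYp₀₀ : Measurable Yp₀₀) (hYp₁₀ : Measurable Yp₁₀) (hYp₁₁ : Measurable Yp₁₁)
    -- (a) Y₀ = Y₀(0) a.s.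
    (ha : ∀ᵐ x ∂P, Y₀ x = Yp₀₀ x)
    -- (b) Y₁ = Y₁(0) a.s. on {D = 0}
    (hb : ∀ᵐ x ∂P, D x = 0 → Y₁ x = Yp₁₀ x)
    -- (c) Y₁ = Y₁(1) a.s. on {D = 1}
    (hc : ∀ᵐ x ∂P, D x = 1 → Y₁ x = Yp₁₁ x)
    -- (d) existence and uniqueness of all conditional Fréchet means
    (ν₀₀ ν₀₁ ν₁₀ ν₁₁ ν₀₀p ν₀₁p ν₁₀p ν₁₁p ν₁₁t : M)
    (h₀₀ : IsCondFrechetMean P {x | D x = 0} Y₀ ν₀₀)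
    (h₀₁ : IsCondFrechetMean P {x | D x = 0} Y₁ ν₀₁)
    (h₁₀ : IsCondFrechetMean P {x | D x = 1} Y₀ ν₁₀)
    (h₁₁ : IsCondFrechetMean P {x | D x = 1} Y₁ ν₁₁)
    (h₀₀p : IsCondFrechetMean P {x | D x = 0} Yp₀₀ ν₀₀p)  -- ν_{0,0}(0)
    (h₀₁p : IsCondFrechetMean P {x | D x = 0} Yp₁₀ ν₀₁p)  -- ν_{0,1}(0)
    (h₁₀p : IsCondFrechetMean P {x | D x = 1} Yp₀₀ ν₁₀p)  -- ν_{1,0}(0)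
    (h₁₁p : IsCondFrechetMean P {x | D x = 1} Yp₁₀ ν₁₁p)  -- ν_{1,1}(0)
    (h₁₁t : IsCondFrechetMean P {x | D x = 1} Yp₁₁ ν₁₁t)  -- ν_{1,1}(1)
    -- (e) parallel trends
    (hpt : Γ ν₀₀p ν₀₁p ν₁₀p = ν₁₁p) :
    Γ ν₀₀ ν₀₁ ν₁₀ = ν₁₁p ∧ ν₁₁ = ν₁₁t := by
  have hM0 : MeasurableSet {x | D x = 0} := hD (measurableSet_singleton 0)
  have hM1 : MeasurableSet {x | D x = 1} := hD (measurableSet_singleton 1)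
  have ha0 : ∀ᵐ x ∂(P.restrict {x | D x = 0}), Y₀ x = Yp₀₀ x := ae_restrict_of_ae ha
  have ha1 : ∀ᵐ x ∂(P.restrict {x | D x = 1}), Y₀ x = Yp₀₀ x := ae_restrict_of_ae ha
  have hb0 : ∀ᵐ x ∂(P.restrict {x | D x = 0}), Y₁ x = Yp₁₀ x :=
    ((ae_restrict_iff' hM0).2 hb)
  have hc1 : ∀ᵐ x ∂(P.restrict {x | D x = 1}), Y₁ x = Yp₁₁ x :=
    ((ae_restrict_iff' hM1).2 hc)
  have e00 : ν₀₀ = ν₀₀p := condFrechetMean_unique_of_ae_eq P _ _ _ ha0 h₀₀ h₀₀p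
  have e01 : ν₀₁ = ν₀₁p := condFrechetMean_unique_of_ae_eq P _ _ _ hb0 h₀₁ h₀₁p
  have e10 : ν₁₀ = ν₁₀p := condFrechetMean_unique_of_ae_eq P _ _ _ ha1 h₁₀ h₁₀p
  have e11 : ν₁₁ = ν₁₁t := condFrechetMean_unique_of_ae_eq P _ _ _ hc1 h₁₁ h₁₁t
  exact ⟨by rw [e00, e01, e10, hpt], e11⟩
end

section
/- (Deterministic error bound for the geodesic DID estimator.) Suppose Γ satisfies: (A1) d(Γ_{α,β}(ω), Γ_{α,β}(ζ)) ≤ C₁ d(ω,ζ) for all α,β,ω,ζ ∈ M; and (A2) d(Γ_{α₁,β₁}(ω), Γ_{α₂,β₂}(ω)) ≤ C₂ {d(α₁,α₂) + d(β₁,β₂)} for all α₁,α₂,β₁,β₂,ω ∈ M. Let ν₀₀, ν₀₁, ν₁₀, ν₁₁ and ν̂₀₀, ν̂₀₁, ν̂₁₀, ν̂₁₁ be arbitrary points of M, and set ν' = Γ_{ν₀₀, ν₀₁}(ν₁₀) and ν̂' = Γ_{ν̂₀₀, ν̂₀₁}(ν̂₁₀). Then d(Γ_{ν̂', ν̂₁₁}(ν'),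 Γ_{ν', ν₁₁}(ν')) ≤ C₁C₂ d(ν̂₁₀, ν₁₀) + C₂² d(ν̂₀₀, ν₀₀) + C₂² d(ν̂₀₁, ν₀₁) + C₂ d(ν̂₁₁, ν₁₁). In particular the distance d_G(τ̂, τ) between the estimated and true geodesic ATT, computed with reference point ν', is bounded by this sum. -/
/-- Deterministic error bound for the geodesic DID estimator. Under the Lipschitz
conditions (A1) and (A2) on the geodesic transport maps, with
`ν' = Γ_{ν₀₀,ν₀₁}(ν₁₀)` and `ν̂' = Γ_{m₀₀,m₀₁}(m₁₀)` (the `m`'s denote the estimated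
Fréchet means `ν̂`), the distance (with reference point `ν'`) between the estimated
geodesic ATT `γ_{ν̂',ν̂₁₁}` and the true geodesic ATT `γ_{ν',ν₁₁}` is bounded by
`C₁C₂ d(ν̂₁₀,ν₁₀) + C₂² d(ν̂₀₀,ν₀₀) + C₂² d(ν̂₀₁,ν₀₁) + C₂ d(ν̂₁₁,ν₁₁)`. -/
theorem geodesic_did_error_bound
    {M : Type*} [MetricSpace M] (Γ : M → M → M → M) (C₁ C₂ : ℝ)
    (hC₁ : 0 < C₁) (hC₂ : 0 < C₂)
    (hA1 : ∀ α β ω ζ : M, dist (Γ α β ω) (Γ α β ζ) ≤ C₁ * dist ω ζ)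
    (hA2 : ∀ α₁ α₂ β₁ β₂ ω : M,
      dist (Γ α₁ β₁ ω) (Γ α₂ β₂ ω) ≤ C₂ * (dist α₁ α₂ + dist β₁ β₂))
    (ν₀₀ ν₀₁ ν₁₀ ν₁₁ m₀₀ m₀₁ m₁₀ m₁₁ : M) :
    dist (Γ (Γ m₀₀ m₀₁ m₁₀) m₁₁ (Γ ν₀₀ ν₀₁ ν₁₀))
         (Γ (Γ ν₀₀ ν₀₁ ν₁₀) ν₁₁ (Γ ν₀₀ ν₀₁ ν₁₀)) ≤
      C₁ * C₂ * dist m₁₀ ν₁₀ + C₂ ^ 2 * dist m₀₀ ν₀₀ +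
        C₂ ^ 2 * dist m₀₁ ν₀₁ + C₂ * dist m₁₁ ν₁₁ := by
  have h1 := hA2 (Γ m₀₀ m₀₁ m₁₀) (Γ ν₀₀ ν₀₁ ν₁₀) m₁₁ ν₁₁ (Γ ν₀₀ ν₀₁ ν₁₀)
  have h2 : dist (Γ m₀₀ m₀₁ m₁₀) (Γ ν₀₀ ν₀₁ ν₁₀) ≤
      C₁ * dist m₁₀ ν₁₀ + C₂ * (dist m₀₀ ν₀₀ + dist m₀₁ ν₀₁) := by
    calc dist (Γ m₀₀ m₀₁ m₁₀) (Γ ν₀₀ ν₀₁ ν₁₀)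
        ≤ dist (Γ m₀₀ m₀₁ m₁₀) (Γ m₀₀ m₀₁ ν₁₀) +
          dist (Γ m₀₀ m₀₁ ν₁₀) (Γ ν₀₀ ν₀₁ ν₁₀) := dist_triangle _ _ _
      _ ≤ _ := add_le_add (hA1 _ _ _ _) (hA2 _ _ _ _ _)
  nlinarith [dist_nonneg (x := m₁₁) (y := ν₁₁)]
end

section
/- (Identification of the group-time geodesic ATT using a never-treated group.) Fix a group g and a time t with 1 ≤ g − δ ≤ t ≤ T − δ and g − δ − 1 ≥ 0. Suppose: (a) for every s, Y_s = Y_s(0) P-almost surely on the never-treated event C = {G = ∞}, and Y_s = Y_s(g) P-almost surely on {G = g}; (b) all conditional Fréchet means appearing below exist and are unique; (c) (limited anticipation) the conditional Fréchet mean of Y_s(g) given {G = g} equals that of Y_s(0) given {G = g} for all s < g − δ; (d) (parallel trends) for every s with g − δ ≤ s ≤ t, Γ_{m(Y_{s−1}(0)|C), m(Y_s(0)|C)}(m(Y_{s−1}(0)|G = g)) = m(Y_s(0)|G = g), where m(·|E) denotes the conditional Fréchet mean given the event E. Define β_{g−δ−1} = m(Y_{g−δ−1} | G = g) and recursively β_s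 = Γ_{m(Y_{s−1}|C), m(Y_s|C)}(β_{s−1}) for s = g − δ, …, t. Then β_t = m(Y_t(0) | G = g) and m(Y_t | G = g) = m(Y_t(g) | G = g); that is, the group-time geodesic ATT τ(g,t) = γ_{m(Y_t(0)|G=g), m(Y_t(g)|G=g)} equals γ_{β_t, m(Y_t|G=g)}. -/
open MeasureTheory

lemma frechet_mean_congr {Ω M : Type*} [MetricSpace M] [MeasurableSpace Ω]
    (P : MeasureTheory.Measure Ω) (E : Set Ω) (hE : MeasurableSet E) (Z W : Ω → M) (ν ν' : M)
    (h : IsCondFrechetMean P E Z ν) (h' : IsCondFrechetMean P E W ν')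
    (heq : ∀ᵐ x ∂P, x ∈ E → Z x = W x) : ν = ν' := by
  by_contra hne
  have key : ∀ ω : M, (∫ x in E, dist (Z x) ω ^ 2 ∂P) = ∫ x in E, dist (W x) ω ^ 2 ∂P := by
    intro ω
    refine MeasureTheory.setIntegral_congr_ae hE ?_
    filter_upwards [heq] with x hx hxE
    rw [hx hxE]
  have h1 := h ν' (Ne.symm hne)
  have h2 := h' ν hne
  rw [key ν, key ν'] at h1
  linarith

/-- Identification of the group-time geodesic ATT using a never-treated group.
With `C = {G = ∞}` the never-treated event, under consistency (a), uniqueness of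
conditional Fréchet means (b), limited anticipation (c), and geodesic parallel
trends (d), the recursion `β_{g-δ-1} = m(Y_{g-δ-1}|G=g)`,
`β_s = Γ_{m(Y_{s-1}|C), m(Y_s|C)}(β_{s-1})` yields `β_t = m(Y_t(0)|G=g)` and
`m(Y_t|G=g) = m(Y_t(g)|G=g)`, so the group-time geodesic ATT
`τ(g,t) = γ_{m(Y_t(0)|G=g), m(Y_t(g)|G=g)}` equals `γ_{β_t, m(Y_t|G=g)}`. -/
theorem staggered_geodesic_did_identification_never_treated
    {Ω M : Type*} [MetricSpace M] [MeasurableSpace Ω]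
    (P : Measure Ω) [IsProbabilityMeasure P]
    (Γ : M → M → M → M)
    (T δ g t : ℕ)
    (hδg : δ + 1 ≤ g) (hgt : g - δ ≤ t) (htT : t + δ ≤ T)
    (G : Ω → ℕ∞) (hG : Measurable G)
    (hGrange : ∀ x, G x = ⊤ ∨ ∃ s : ℕ, 1 ≤ s ∧ s ≤ T ∧ G x = (s : ℕ∞))
    (hPC : P {x | G x = ⊤} ≠ 0) (hPg : P {x | G x = (g : ℕ∞)} ≠ 0)
    (Y Yp Yg : ℕ → Ω → M)   -- observed outcomes Y_s, potential Y_s(0), potential Y_s(g)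
    -- (a) consistency: a.s. on C, Y_s = Y_s(0); a.s. on {G = g}, Y_s = Y_s(g)
    (haC : ∀ s ≤ T, ∀ᵐ x ∂P, G x = ⊤ → Y s x = Yp s x)
    (hag : ∀ s ≤ T, ∀ᵐ x ∂P, G x = (g : ℕ∞) → Y s x = Yg s x)
    -- (b) all conditional Fréchet means exist and are unique
    (mYC mYG mYpC mYpG mYgG : ℕ → M)
    (hmYC : ∀ s ≤ T, IsCondFrechetMean P {x | G x = ⊤} (Y s) (mYC s))
    (hmYG : ∀ s ≤ T, IsCondFrechetMean P {x | G x = (g : ℕ∞)} (Y s) (mYG s))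
    (hmYpC : ∀ s ≤ T, IsCondFrechetMean P {x | G x = ⊤} (Yp s) (mYpC s))
    (hmYpG : ∀ s ≤ T, IsCondFrechetMean P {x | G x = (g : ℕ∞)} (Yp s) (mYpG s))
    (hmYgG : ∀ s ≤ T, IsCondFrechetMean P {x | G x = (g : ℕ∞)} (Yg s) (mYgG s))
    -- (c) limited anticipation
    (hanticip : ∀ s, s < g - δ → mYgG s = mYpG s)
    -- (d) parallel trends based on the never-treated group
    (hpt : ∀ s, g - δ ≤ s → s ≤ t → Γ (mYpC (s - 1)) (mYpC s) (mYpG (s - 1)) = mYpG s)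
    -- the recursively defined β
    (β : ℕ → M)
    (hβ₀ : β (g - δ - 1) = mYG (g - δ - 1))
    (hβrec : ∀ s, g - δ ≤ s → s ≤ t → β s = Γ (mYC (s - 1)) (mYC s) (β (s - 1))) :
    β t = mYpG t ∧ mYG t = mYgG t := by
  have hEC : MeasurableSet {x | G x = (⊤ : ℕ∞)} := hG (measurableSet_singleton _)
  have hEg : MeasurableSet {x | G x = (g : ℕ∞)} := hG (measurableSet_singleton _)
  have htT' : t ≤ T := by omega
  have hCeq : ∀ s ≤ T, mYC s = mYpC s := fun s hs =>
    frechet_mean_congr P _ hEC (Y s) (Yp s) _ _ (hmYC s hs) (hmYpC s hs) (haC s hs)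
  have hGeq : ∀ s ≤ T, mYG s = mYgG s := fun s hs =>
    frechet_mean_congr P _ hEg (Y s) (Yg s) _ _ (hmYG s hs) (hmYgG s hs) (hag s hs)
  have hbase : β (g - δ - 1) = mYpG (g - δ - 1) := by
    rw [hβ₀, hGeq _ (by omega), hanticip _ (by omega)]
  have main : ∀ s, g - δ - 1 ≤ s → s ≤ t → β s = mYpG s := by
    intro s
    induction s with
    | zero =>
      intro _ _
      have : g - δ - 1 = 0 := by omega
      rw [← this]; exact hbase
    | succ n ih =>
      intro h1 h2
      rcases eq_or_lt_of_le h1 with h | h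
      · rw [← h]; exact hbase
      · have hs : g - δ ≤ n + 1 := by omega
        rw [hβrec (n + 1) hs h2]
        simp only [Nat.add_sub_cancel]
        rw [ih (by omega) (by omega),
          hCeq _ (by omega), hCeq _ (by omega)]
        simpa using hpt (n + 1) hs h2
  exact ⟨main t (by omega) le_rfl, hGeq t htT'⟩
end

section
/- (Corollary: closed form of the staggered geodesic DID estimand.) In addition to the hypotheses of the identification theorem for the group-time geodesic ATT based on a never-treated group (observed outcomes equal untreated potential outcomes a.s. on C = {G = ∞} and equal Y_s(g) a.s. on {G = g}; uniqueness of all conditional Fréchet means; limited anticipation m(Y_s(g)|G=g) = m(Y_s(0)|G=g) for s < g − δ; parallel trends Γ_{m(Y_{s−1}(0)|C), m(Y_s(0)|C)}(m(Y_{s−1}(0)|G=g)) = m(Y_s(0)|G=g) for g − δ ≤ s ≤ t), assume the composition law Γ_{ζ,β}(Γ_{α,ζ}(ω)) = Γ_{α,β}(ω) for all α, ζ, β, ω ∈ M. Then the start point of the group-time geodesic ATT satisfies m(Y_t(0) | G = g) = Γ_{m(Y_{g−δ−1}|C), m(Y_t|C)}(m(Y_{g−δ−1}|G = g)); that is, τ(g,t)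 = ⊖γ_{m(Y_{g−δ−1}|C), m(Y_t|C)} ⊕ γ_{m(Y_{g−δ−1}|G=g), m(Y_t|G=g)}. -/
open MeasureTheory

lemma condFrechetMean_unique {Ω M : Type*} [MetricSpace M] [MeasurableSpace Ω]
    (P : MeasureTheory.Measure Ω) (E : Set Ω) (hE : MeasurableSet E) (Z Z' : Ω → M)
    (hae : ∀ᵐ x ∂P, x ∈ E → Z x = Z' x) (ν ν' : M)
    (h : IsCondFrechetMean P E Z ν) (h' : IsCondFrechetMean P E Z' ν') : ν = ν' := by
  have key : ∀ ω : M, (∫ x in E, dist (Z x) ω ^ 2 ∂P) = ∫ x in E, dist (Z' x) ω ^ 2 ∂P := by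
    intro ω
    apply MeasureTheory.setIntegral_congr_ae hE
    filter_upwards [hae] with x hx hxE
    rw [hx hxE]
  by_contra hne
  have h1 := h ν' (Ne.symm hne)
  have h2 := h' ν hne
  rw [key ν'] at h1
  rw [← key ν] at h2
  linarith

/-- Corollary: closed form of the staggered geodesic DID estimand based on a
never-treated group. Under the hypotheses of the identification theorem (consistency,
uniqueness of conditional Fréchet means, limited anticipation, parallel trends) and
the composition law `Γ_{ζ,β} ∘ Γ_{α,ζ} = Γ_{α,β}`, the start point of the group-time
geodesic ATT satisfies
`m(Y_t(0)|G=g) = Γ_{m(Y_{g-δ-1}|C), m(Y_t|C)}(m(Y_{g-δ-1}|G=g))`, and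
`m(Y_t|G=g) = m(Y_t(g)|G=g)`; that is,
`τ(g,t) = ⊖γ_{m(Y_{g-δ-1}|C), m(Y_t|C)} ⊕ γ_{m(Y_{g-δ-1}|G=g), m(Y_t|G=g)}`. -/
theorem staggered_geodesic_did_closed_form_never_treated
    {Ω M : Type*} [MetricSpace M] [MeasurableSpace Ω]
    (P : Measure Ω) [IsProbabilityMeasure P]
    (Γ : M → M → M → M)
    -- composition law for the geodesic transport maps
    (hcomp : ∀ α ζ β ω : M, Γ ζ β (Γ α ζ ω) = Γ α β ω)
    (T δ g t : ℕ)
    (hδg : δ + 1 ≤ g) (hgt : g - δ ≤ t) (htT : t + δ ≤ T)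
    (G : Ω → ℕ∞) (hG : Measurable G)
    (hGrange : ∀ x, G x = ⊤ ∨ ∃ s : ℕ, 1 ≤ s ∧ s ≤ T ∧ G x = (s : ℕ∞))
    (hPC : P {x | G x = ⊤} ≠ 0) (hPg : P {x | G x = (g : ℕ∞)} ≠ 0)
    (Y Yp Yg : ℕ → Ω → M)   -- observed outcomes Y_s, potential Y_s(0), potential Y_s(g)
    -- consistency: a.s. on C = {G = ∞}, Y_s = Y_s(0); a.s. on {G = g}, Y_s = Y_s(g)
    (haC : ∀ s ≤ T, ∀ᵐ x ∂P, G x = ⊤ → Y s x = Yp s x)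
    (hag : ∀ s ≤ T, ∀ᵐ x ∂P, G x = (g : ℕ∞) → Y s x = Yg s x)
    -- all conditional Fréchet means exist and are unique
    (mYC mYG mYpC mYpG mYgG : ℕ → M)
    (hmYC : ∀ s ≤ T, IsCondFrechetMean P {x | G x = ⊤} (Y s) (mYC s))
    (hmYG : ∀ s ≤ T, IsCondFrechetMean P {x | G x = (g : ℕ∞)} (Y s) (mYG s))
    (hmYpC : ∀ s ≤ T, IsCondFrechetMean P {x | G x = ⊤} (Yp s) (mYpC s))
    (hmYpG : ∀ s ≤ T, IsCondFrechetMean P {x | G x = (g : ℕ∞)} (Yp s) (mYpG s))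
    (hmYgG : ∀ s ≤ T, IsCondFrechetMean P {x | G x = (g : ℕ∞)} (Yg s) (mYgG s))
    -- limited anticipation
    (hanticip : ∀ s, s < g - δ → mYgG s = mYpG s)
    -- parallel trends based on the never-treated group
    (hpt : ∀ s, g - δ ≤ s → s ≤ t →
      Γ (mYpC (s - 1)) (mYpC s) (mYpG (s - 1)) = mYpG s) :
    mYpG t = Γ (mYC (g - δ - 1)) (mYC t) (mYG (g - δ - 1)) ∧ mYG t = mYgG t := by
  have hTmem : t ≤ T := le_trans (Nat.le_add_right t δ) htT
  have hk1 : 1 ≤ g - δ := by omega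
  have hkT : g - δ - 1 ≤ T := by omega
  have hCmeas : MeasurableSet {x | G x = ⊤} := hG (measurableSet_singleton ⊤)
  have hgmeas : MeasurableSet {x | G x = (g : ℕ∞)} := hG (measurableSet_singleton _)
  have hYC : ∀ s ≤ T, mYC s = mYpC s := fun s hs =>
    condFrechetMean_unique P _ hCmeas (Y s) (Yp s) (haC s hs) _ _ (hmYC s hs) (hmYpC s hs)
  have hYG : ∀ s ≤ T, mYG s = mYgG s := fun s hs =>
    condFrechetMean_unique P _ hgmeas (Y s) (Yg s) (hag s hs) _ _ (hmYG s hs) (hmYgG s hs)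
  have hstart : mYG (g - δ - 1) = mYpG (g - δ - 1) := by
    rw [hYG _ hkT, hanticip _ (by omega)]
  -- induction along parallel trends
  have hind : ∀ s, g - δ ≤ s → s ≤ t →
      mYpG s = Γ (mYpC (g - δ - 1)) (mYpC s) (mYpG (g - δ - 1)) := by
    intro s hs hst
    induction s, hs using Nat.le_induction with
    | base =>
        rw [← hpt (g - δ) le_rfl hst]
    | succ n hn ih =>
        have hnt : n ≤ t := by omega
        rw [← hpt (n + 1) (by omega) hst]
        simp only [Nat.add_sub_cancel]
        rw [ih hnt, hcomp]
  constructor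
  · rw [hind t hgt le_rfl, hYC _ hkT, hYC _ hTmem, hstart]
  · exact hYG t hTmem
end

section
/- (Verification of the endpoint-Lipschitz property of the Wasserstein geodesic transport map.) Let 0 < l ≤ L < ∞ and let I = [a,b] be a compact interval. Let F₁, G₁, F₂, G₂, H : I → [0,1] be strictly increasing, continuously differentiable bijections whose derivatives take values in [l, L], with inverse functions F₁⁻¹, G₁⁻¹, F₂⁻¹, G₂⁻¹, H⁻¹ : [0,1] → I. Then [∫₀¹ { F₂⁻¹(F₁(H⁻¹(p))) − G₂⁻¹(G₁(H⁻¹(p))) }² dp ]^{1/2} ≤ √(2L³/l³) · [∫₀¹ (F₁⁻¹(p) − G₁⁻¹(p))² dp]^{1/2} + √(2L/l) · [∫₀¹ (F₂⁻¹(p) − G₂⁻¹(p))² dp]^{1/2}. -/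
/-!
Put `x = H⁻¹(p)` and `q = G₁(x)`. Since `F₂⁻¹` is `1/l`-Lipschitz and `F₁` is `L`-Lipschitz,
`|F₂⁻¹(F₁ x) - F₂⁻¹(q)| ≤ |F₁(G₁⁻¹ q) - F₁(F₁⁻¹ q)| / l ≤ (L/l) |F₁⁻¹ q - G₁⁻¹ q|`, so the integrand
is at most `2 (L/l)² (F₁⁻¹ - G₁⁻¹)²(q) + 2 (F₂⁻¹ - G₂⁻¹)²(q)`. The substitution `p ↦ q = G₁(H⁻¹ p)`
has Jacobian `H'/G₁' ≤ L/l`, which gives the integral bound with constants `2L³/l³` and `2L/l`;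
finally `√(s + t) ≤ √s + √t`.
-/

/-- A strictly increasing, continuously differentiable CDF of a distribution on the
compact interval `[a,b]`, mapping `[a,b]` bijectively onto `[0,1]`, with density
(derivative) taking values in `[l,L]`, together with its inverse (the quantile
function). -/
structure RegularCDF (a b l L : ℝ) where
  toFun : ℝ → ℝ
  inv : ℝ → ℝ
  der : ℝ → ℝ
  strictMonoOn : StrictMonoOn toFun (Set.Icc a b)
  bijOn : Set.BijOn toFun (Set.Icc a b) (Set.Icc 0 1)
  hasDeriv : ∀ x ∈ Set.Icc a b, HasDerivWithinAt toFun (der x) (Set.Icc a b) x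
  derCont : ContinuousOn der (Set.Icc a b)
  der_mem : ∀ x ∈ Set.Icc a b, der x ∈ Set.Icc l L
  leftInv : ∀ x ∈ Set.Icc a b, inv (toFun x) = x
  rightInv : ∀ p ∈ Set.Icc (0 : ℝ) 1, toFun (inv p) = p
  inv_mapsTo : ∀ p ∈ Set.Icc (0 : ℝ) 1, inv p ∈ Set.Icc a b

open Set MeasureTheory

theorem Convex.mul_sub_le_image_sub_of_le_hasDerivWithinAt {D : Set ℝ} (hD : Convex ℝ D)
    {f f' : ℝ → ℝ} {C : ℝ} (hf : ∀ x ∈ D, HasDerivWithinAt f (f' x) D x)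
    (hC : ∀ x ∈ D, C ≤ f' x) {x y : ℝ} (hx : x ∈ D) (hy : y ∈ D) (hxy : x ≤ y) :
    C * (y - x) ≤ f y - f x := by
  have hg := fun z (hz : z ∈ D) =>
    (hf z hz).sub ((hasDerivAt_id' z).const_mul C).hasDerivWithinAt
  have hmono : MonotoneOn (fun z => f z - C * z) D :=
    monotoneOn_of_hasDerivWithinAt_nonneg hD (fun z hz => (hg z hz).continuousWithinAt)
      (fun z hz => (hg z (interior_subset hz)).mono interior_subset)
      (fun z hz => by simpa using hC z (interior_subset hz))
  linarith [hmono hx hy hxy]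

theorem Convex.image_sub_le_mul_sub_of_hasDerivWithinAt_le {D : Set ℝ} (hD : Convex ℝ D)
    {f f' : ℝ → ℝ} {C : ℝ} (hf : ∀ x ∈ D, HasDerivWithinAt f (f' x) D x)
    (hC : ∀ x ∈ D, f' x ≤ C) {x y : ℝ} (hx : x ∈ D) (hy : y ∈ D) (hxy : x ≤ y) :
    f y - f x ≤ C * (y - x) := by
  have := hD.mul_sub_le_image_sub_of_le_hasDerivWithinAt (f := fun z => -f z)
    (fun z hz => (hf z hz).neg) (C := -C) (fun z hz => neg_le_neg (hC z hz)) hx hy hxy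
  linarith

theorem Real.sqrt_add_le_add_sqrt {x y : ℝ} (hx : 0 ≤ x) (hy : 0 ≤ y) :
    √(x + y) ≤ √x + √y := by
  refine Real.sqrt_le_iff.mpr ⟨by positivity, ?_⟩
  nlinarith [Real.sq_sqrt hx, Real.sq_sqrt hy, Real.sqrt_nonneg x, Real.sqrt_nonneg y]

theorem setIntegral_Ioo_zero_one_eq_intervalIntegral (f : ℝ → ℝ) :
    ∫ p in Ioo (0 : ℝ) 1, f p = ∫ p in (0 : ℝ)..1, f p := by
  rw [intervalIntegral.integral_of_le zero_le_one, integral_Ioc_eq_integral_Ioo]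

namespace RegularCDF

variable {a b l L : ℝ}

theorem lower_le_upper (R : RegularCDF a b l L) (hab : a ≤ b) : l ≤ L :=
  (R.der_mem a ⟨le_rfl, hab⟩).1.trans (R.der_mem a ⟨le_rfl, hab⟩).2

variable (R : RegularCDF a b l L)

theorem continuousOn_toFun : ContinuousOn R.toFun (Icc a b) :=
  fun x hx => (R.hasDeriv x hx).continuousWithinAt

theorem mapsTo_toFun : MapsTo R.toFun (Icc a b) (Icc 0 1) := R.bijOn.mapsTo

theorem toFun_left (hab : a ≤ b) : R.toFun a = 0 := by
  obtain ⟨x, hx, hx0⟩ := R.bijOn.surjOn (left_mem_Icc.2 zero_le_one)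
  have := R.strictMonoOn.monotoneOn (left_mem_Icc.2 hab) hx hx.1
  linarith [(R.mapsTo_toFun (left_mem_Icc.2 hab)).1]

theorem toFun_right (hab : a ≤ b) : R.toFun b = 1 := by
  obtain ⟨x, hx, hx1⟩ := R.bijOn.surjOn (right_mem_Icc.2 zero_le_one)
  have := R.strictMonoOn.monotoneOn hx (right_mem_Icc.2 hab) hx.2
  linarith [(R.mapsTo_toFun (right_mem_Icc.2 hab)).2]

theorem abs_toFun_sub_le {x y : ℝ} (hx : x ∈ Icc a b) (hy : y ∈ Icc a b) :
    |R.toFun x - R.toFun y| ≤ L * |x - y| := by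
  wlog hxy : y ≤ x generalizing x y
  · rw [abs_sub_comm, abs_sub_comm x]
    exact this hy hx (le_of_not_ge hxy)
  rw [abs_of_nonneg (sub_nonneg.2 (R.strictMonoOn.monotoneOn hy hx hxy)),
    abs_of_nonneg (sub_nonneg.2 hxy)]
  exact (convex_Icc a b).image_sub_le_mul_sub_of_hasDerivWithinAt_le R.hasDeriv
    (fun z hz => (R.der_mem z hz).2) hy hx hxy

theorem mul_abs_sub_le_abs_toFun_sub {x y : ℝ} (hx : x ∈ Icc a b) (hy : y ∈ Icc a b) :
    l * |x - y| ≤ |R.toFun x - R.toFun y| := by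
  wlog hxy : y ≤ x generalizing x y
  · rw [abs_sub_comm, abs_sub_comm (R.toFun x)]
    exact this hy hx (le_of_not_ge hxy)
  rw [abs_of_nonneg (sub_nonneg.2 hxy)]
  exact ((convex_Icc a b).mul_sub_le_image_sub_of_le_hasDerivWithinAt R.hasDeriv
    (fun z hz => (R.der_mem z hz).1) hy hx hxy).trans (le_abs_self _)

theorem abs_inv_sub_le (hl : 0 < l) {p q : ℝ} (hp : p ∈ Icc (0 : ℝ) 1) (hq : q ∈ Icc (0 : ℝ) 1) :
    |R.inv p - R.inv q| ≤ |p - q| / l := by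
  rw [le_div_iff₀ hl, mul_comm]
  simpa only [R.rightInv p hp, R.rightInv q hq] using
    R.mul_abs_sub_le_abs_toFun_sub (R.inv_mapsTo p hp) (R.inv_mapsTo q hq)

theorem continuousOn_inv (hl : 0 < l) : ContinuousOn R.inv (Icc 0 1) := by
  refine (LipschitzOnWith.of_dist_le_mul (K := (l⁻¹).toNNReal) fun p hp q hq => ?_).continuousOn
  rw [Real.dist_eq, Real.dist_eq, Real.coe_toNNReal _ (inv_nonneg.2 hl.le), inv_mul_eq_div]
  exact R.abs_inv_sub_le hl hp hq

theorem intervalIntegral_comp_toFun_mul_der (hab : a ≤ b) {φ : ℝ → ℝ}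
    (hφ : ContinuousOn φ (Icc 0 1)) :
    ∫ x in a..b, φ (R.toFun x) * R.der x = ∫ p in (0 : ℝ)..1, φ p := by
  rw [← R.toFun_left hab, ← R.toFun_right hab]
  have hI : uIcc a b = Icc a b := uIcc_of_le hab
  refine intervalIntegral.integral_comp_mul_deriv'' (hI ▸ R.continuousOn_toFun)
    (fun x hx => ?_) (hI ▸ R.derCont) (hI ▸ hφ.mono (image_subset_iff.2 R.mapsTo_toFun))
  rw [min_eq_left hab, max_eq_right hab] at hx
  exact ((R.hasDeriv x (Ioo_subset_Icc_self hx)).hasDerivAt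
    (Icc_mem_nhds hx.1 hx.2)).hasDerivWithinAt

/-- Substituting `p = H x` and then `G x = q` turns the left side into `∫₀¹ φ(q) (H'/G')(G⁻¹ q) dq`,
and `H'/G' ≤ L/l`. -/
theorem integral_comp_toFun_comp_inv_le (G H : RegularCDF a b l L) (hab : a ≤ b) (hl : 0 < l)
    {φ : ℝ → ℝ} (hφ : ContinuousOn φ (Icc 0 1)) (hφ₀ : ∀ p ∈ Icc (0 : ℝ) 1, 0 ≤ φ p) :
    ∫ p in Ioo (0 : ℝ) 1, φ (G.toFun (H.inv p)) ≤ L / l * ∫ p in Ioo (0 : ℝ) 1, φ p := by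
  have hφG : ContinuousOn (fun x => φ (G.toFun x)) (Icc a b) :=
    hφ.comp G.continuousOn_toFun G.mapsTo_toFun
  have hφGH : ContinuousOn (fun p => φ (G.toFun (H.inv p))) (Icc 0 1) :=
    hφG.comp (H.continuousOn_inv hl) H.inv_mapsTo
  rw [setIntegral_Ioo_zero_one_eq_intervalIntegral, setIntegral_Ioo_zero_one_eq_intervalIntegral]
  calc ∫ p in (0 : ℝ)..1, φ (G.toFun (H.inv p))
      = ∫ x in a..b, φ (G.toFun (H.inv (H.toFun x))) * H.der x :=
        (H.intervalIntegral_comp_toFun_mul_der hab hφGH).symm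
    _ = ∫ x in a..b, φ (G.toFun x) * H.der x :=
        intervalIntegral.integral_congr fun x hx => by
          rw [H.leftInv x (uIcc_of_le hab ▸ hx)]
    _ ≤ ∫ x in a..b, L / l * (φ (G.toFun x) * G.der x) := by
        refine intervalIntegral.integral_mono_on hab ?_ ?_ fun x hx => ?_
        · exact (hφG.mul H.derCont).intervalIntegrable_of_Icc hab
        · exact (continuousOn_const.mul (hφG.mul G.derCont)).intervalIntegrable_of_Icc hab
        · have hH := H.der_mem x hx
          have hG := G.der_mem x hx
          have hder : H.der x ≤ L / l * G.der x := by
            rw [div_mul_eq_mul_div, le_div_iff₀ hl]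
            nlinarith [mul_le_mul_of_nonneg_right hH.2 hl.le,
              mul_le_mul_of_nonneg_left hG.1 (hl.le.trans (hH.1.trans hH.2))]
          rw [mul_left_comm]
          exact mul_le_mul_of_nonneg_left hder (hφ₀ _ (G.mapsTo_toFun hx))
    _ = L / l * ∫ p in (0 : ℝ)..1, φ p := by
        rw [intervalIntegral.integral_const_mul, G.intervalIntegral_comp_toFun_mul_der hab hφ]

theorem abs_inv_toFun_sub_inv_toFun_le (F₁ G₁ F₂ G₂ : RegularCDF a b l L) (hl : 0 < l)
    {x : ℝ} (hx : x ∈ Icc a b) :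
    |F₂.inv (F₁.toFun x) - G₂.inv (G₁.toFun x)| ≤
      L / l * |F₁.inv (G₁.toFun x) - G₁.inv (G₁.toFun x)| +
        |F₂.inv (G₁.toFun x) - G₂.inv (G₁.toFun x)| := by
  set q := G₁.toFun x
  have hq : q ∈ Icc (0 : ℝ) 1 := G₁.mapsTo_toFun hx
  have hF₁ : |F₁.toFun x - q| ≤ L * |F₁.inv q - G₁.inv q| := by
    have hxq : F₁.toFun x - q = F₁.toFun (G₁.inv q) - F₁.toFun (F₁.inv q) := by
      rw [G₁.leftInv x hx, F₁.rightInv q hq]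
    rw [hxq, abs_sub_comm (F₁.inv q)]
    exact F₁.abs_toFun_sub_le (G₁.inv_mapsTo q hq) (F₁.inv_mapsTo q hq)
  calc |F₂.inv (F₁.toFun x) - G₂.inv q|
      = |(F₂.inv (F₁.toFun x) - F₂.inv q) + (F₂.inv q - G₂.inv q)| := by ring_nf
    _ ≤ |F₂.inv (F₁.toFun x) - F₂.inv q| + |F₂.inv q - G₂.inv q| := abs_add_le _ _
    _ ≤ |F₁.toFun x - q| / l + |F₂.inv q - G₂.inv q| := by
        gcongr
        exact F₂.abs_inv_sub_le hl (F₁.mapsTo_toFun hx) hq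
    _ ≤ L * |F₁.inv q - G₁.inv q| / l + |F₂.inv q - G₂.inv q| := by gcongr
    _ = L / l * |F₁.inv q - G₁.inv q| + |F₂.inv q - G₂.inv q| := by ring

theorem integral_sq_inv_toFun_inv_sub_le (F₁ G₁ F₂ G₂ H : RegularCDF a b l L) (hab : a ≤ b)
    (hl : 0 < l) :
    ∫ p in Ioo (0 : ℝ) 1, (F₂.inv (F₁.toFun (H.inv p)) - G₂.inv (G₁.toFun (H.inv p))) ^ 2 ≤
      2 * L ^ 3 / l ^ 3 * (∫ p in Ioo (0 : ℝ) 1, (F₁.inv p - G₁.inv p) ^ 2) +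
        2 * L / l * ∫ p in Ioo (0 : ℝ) 1, (F₂.inv p - G₂.inv p) ^ 2 := by
  have hψ := G₁.continuousOn_toFun.comp (H.continuousOn_inv hl) H.inv_mapsTo
  have hψ_mapsTo : MapsTo (fun p => G₁.toFun (H.inv p)) (Icc 0 1) (Icc 0 1) :=
    fun p hp => G₁.mapsTo_toFun (H.inv_mapsTo p hp)
  have hu : ContinuousOn (fun q => (F₁.inv q - G₁.inv q) ^ 2) (Icc 0 1) :=
    ((F₁.continuousOn_inv hl).sub (G₁.continuousOn_inv hl)).pow 2
  have hv : ContinuousOn (fun q => (F₂.inv q - G₂.inv q) ^ 2) (Icc 0 1) :=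
    ((F₂.continuousOn_inv hl).sub (G₂.continuousOn_inv hl)).pow 2
  have hu_int : IntegrableOn
      (fun p => (F₁.inv (G₁.toFun (H.inv p)) - G₁.inv (G₁.toFun (H.inv p))) ^ 2) (Ioo 0 1) :=
    (hu.comp hψ hψ_mapsTo).integrableOn_Icc.mono_set Ioo_subset_Icc_self
  have hv_int : IntegrableOn
      (fun p => (F₂.inv (G₁.toFun (H.inv p)) - G₂.inv (G₁.toFun (H.inv p))) ^ 2) (Ioo 0 1) :=
    (hv.comp hψ hψ_mapsTo).integrableOn_Icc.mono_set Ioo_subset_Icc_self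
  have hpoint : ∀ p ∈ Ioo (0 : ℝ) 1,
      (F₂.inv (F₁.toFun (H.inv p)) - G₂.inv (G₁.toFun (H.inv p))) ^ 2 ≤
        2 * (L / l) ^ 2 * (F₁.inv (G₁.toFun (H.inv p)) - G₁.inv (G₁.toFun (H.inv p))) ^ 2 +
          2 * (F₂.inv (G₁.toFun (H.inv p)) - G₂.inv (G₁.toFun (H.inv p))) ^ 2 := by
    intro p hp
    have h := abs_inv_toFun_sub_inv_toFun_le F₁ G₁ F₂ G₂ hl
      (H.inv_mapsTo p (Ioo_subset_Icc_self hp))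
    calc _ = |F₂.inv (F₁.toFun (H.inv p)) - G₂.inv (G₁.toFun (H.inv p))| ^ 2 := (sq_abs _).symm
      _ ≤ _ := pow_le_pow_left₀ (abs_nonneg _) h 2
      _ ≤ _ := add_sq_le
      _ = _ := by simp only [mul_pow, sq_abs]; ring
  calc _ ≤ ∫ p in Ioo (0 : ℝ) 1,
        (2 * (L / l) ^ 2 * (F₁.inv (G₁.toFun (H.inv p)) - G₁.inv (G₁.toFun (H.inv p))) ^ 2 +
          2 * (F₂.inv (G₁.toFun (H.inv p)) - G₂.inv (G₁.toFun (H.inv p))) ^ 2) :=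
        integral_mono_of_nonneg (ae_of_all _ fun _ => sq_nonneg _)
          ((hu_int.const_mul _).add (hv_int.const_mul _))
          ((ae_restrict_iff' measurableSet_Ioo).2 (ae_of_all _ hpoint))
    _ = 2 * (L / l) ^ 2 * (∫ p in Ioo (0 : ℝ) 1,
            (F₁.inv (G₁.toFun (H.inv p)) - G₁.inv (G₁.toFun (H.inv p))) ^ 2) +
          2 * ∫ p in Ioo (0 : ℝ) 1,
            (F₂.inv (G₁.toFun (H.inv p)) - G₂.inv (G₁.toFun (H.inv p))) ^ 2 := by
        rw [integral_add (hu_int.const_mul _) (hv_int.const_mul _), integral_const_mul,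
          integral_const_mul]
    _ ≤ 2 * (L / l) ^ 2 * (L / l * ∫ p in Ioo (0 : ℝ) 1, (F₁.inv p - G₁.inv p) ^ 2) +
          2 * (L / l * ∫ p in Ioo (0 : ℝ) 1, (F₂.inv p - G₂.inv p) ^ 2) := by
        gcongr
        · exact integral_comp_toFun_comp_inv_le G₁ H hab hl hu fun _ _ => sq_nonneg _
        · exact integral_comp_toFun_comp_inv_le G₁ H hab hl hv fun _ _ => sq_nonneg _
    _ = _ := by ring

end RegularCDF

theorem wasserstein_transport_endpoint_lipschitz_general
    (a b l L : ℝ) (hab : a < b) (hl : 0 < l)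
    (F₁ G₁ F₂ G₂ H : RegularCDF a b l L) :
    Real.sqrt (∫ p in Set.Ioo (0 : ℝ) 1,
        (F₂.inv (F₁.toFun (H.inv p)) - G₂.inv (G₁.toFun (H.inv p))) ^ 2) ≤
      Real.sqrt (2 * L ^ 3 / l ^ 3) *
          Real.sqrt (∫ p in Set.Ioo (0 : ℝ) 1, (F₁.inv p - G₁.inv p) ^ 2) +
        Real.sqrt (2 * L / l) *
          Real.sqrt (∫ p in Set.Ioo (0 : ℝ) 1, (F₂.inv p - G₂.inv p) ^ 2) := by
  have hL : 0 ≤ L := hl.le.trans (H.lower_le_upper hab.le)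
  rw [← Real.sqrt_mul (by positivity), ← Real.sqrt_mul (by positivity)]
  refine (Real.sqrt_le_sqrt
    (RegularCDF.integral_sq_inv_toFun_inv_sub_le F₁ G₁ F₂ G₂ H hab.le hl)).trans ?_
  exact Real.sqrt_add_le_add_sqrt
      (mul_nonneg (by positivity) (setIntegral_nonneg measurableSet_Ioo fun _ _ => sq_nonneg _))
      (mul_nonneg (by positivity) (setIntegral_nonneg measurableSet_Ioo fun _ _ => sq_nonneg _))

/-- Endpoint-Lipschitz property of the Wasserstein geodesic transport map: for CDFs
`F₁, G₁, F₂, G₂, H` on `I = [a,b]` with densities in `[l,L]`,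
`‖F₂⁻¹∘F₁∘H⁻¹ − G₂⁻¹∘G₁∘H⁻¹‖_{L²(0,1)} ≤ √(2L³/l³) ‖F₁⁻¹ − G₁⁻¹‖_{L²(0,1)}
  + √(2L/l) ‖F₂⁻¹ − G₂⁻¹‖_{L²(0,1)}`. -/
theorem wasserstein_transport_endpoint_lipschitz
    (a b l L : ℝ) (hab : a < b) (hl : 0 < l) (hlL : l ≤ L)
    (F₁ G₁ F₂ G₂ H : RegularCDF a b l L) :
    Real.sqrt (∫ p in Set.Ioo (0 : ℝ) 1,
        (F₂.inv (F₁.toFun (H.inv p)) - G₂.inv (G₁.toFun (H.inv p))) ^ 2) ≤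
      Real.sqrt (2 * L ^ 3 / l ^ 3) *
          Real.sqrt (∫ p in Set.Ioo (0 : ℝ) 1, (F₁.inv p - G₁.inv p) ^ 2) +
        Real.sqrt (2 * L / l) *
          Real.sqrt (∫ p in Set.Ioo (0 : ℝ) 1, (F₂.inv p - G₂.inv p) ^ 2) :=
  wasserstein_transport_endpoint_lipschitz_general a b l L hab hl F₁ G₁ F₂ G₂ H
end
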